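/- Suppose K is a field with more than two elements, S is a spanning subset of X, and the graph G(S) is connected. Then, for any α ∈ X*, the affine transvection group Tr^α(S) has at most one non-singleton orbit on X. -/

import Mathlib

/-- The graph `G(S)`. -/
def transGraph {K X : Type*} [Field K] [AddCommGroup X] [Module K X]
    (ω : X →ₗ[K] X →ₗ[K] K) (S : Set X) : SimpleGraph S :=
  SimpleGraph.fromRel (fun u v => ω u.1 v.1 ≠ 0)

/-- Affine transvections `T^{α(s)}_{s,k} : x ↦ x + k(ω(x,s) + α(s))·s`. -/
def affTransvectionSet {K X : Type*} [Field K] [AddCommGroup X] [Module K X]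
    (ω : X →ₗ[K] X →ₗ[K] K) (S : Set X) (α : X → K) : Set (Equiv.Perm X) :=
  {f | ∃ s ∈ S, ∃ k : K, k ≠ 0 ∧ ∀ x, f x = x + (k * (ω x s + α s)) • s}

/-- The affine transvection group `Tr^α(S)`. -/
def affTransvectionGroup {K X : Type*} [Field K] [AddCommGroup X] [Module K X]
    (ω : X →ₗ[K] X →ₗ[K] K) (S : Set X) (α : X → K) : Subgroup (Equiv.Perm X) :=
  Subgroup.closure (affTransvectionSet ω S α)

/-!
Write `c_s(z) = ω(z,s) + α(s)`, so that `T_{s,k}` moves `z` by `k c_s(z) s`. If `c_s(z) ≠ 0`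
then the transvections along `s` move `z` to every point of the line `z + K s`, while if
`c_s(z) = 0` for all `s ∈ S` then `z` is fixed by the whole group.

Fix `s ∈ S`. Walking in `G(S)` from `s` to `t`, and using `|K| > 2` to choose detours that keep
the relevant `c_u` nonzero, one can move `z` to `z + a t` inside its orbit whenever `c_s` is
nonzero at both points. Writing `z' - z` as a sum of multiples of elements of `S` (and again
choosing detours), all points with `c_s ≠ 0` lie in one orbit. Finally, a walk from `s` to `t`
carries a point with `c_s ≠ 0` inside its orbit to one with `c_t ≠ 0`.
-/

lemma exists_ne_and_ne {K : Type*} [Field K] (hK : ∃ k : K, k ≠ 0 ∧ k ≠ 1) (a b : K) :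
    ∃ c, c ≠ a ∧ c ≠ b := by
  obtain ⟨k, hk0, hk1⟩ := hK
  by_cases h : a + 1 = b
  · exact ⟨a + k, by simpa, fun h' => hk1 (by linear_combination h' - h)⟩
  · exact ⟨a + 1, by simp, h⟩

lemma exists_add_mul_ne_zero {K : Type*} [Field K] {ν : K} (hν : ν ≠ 0) (c : K) :
    ∃ b, c + b * ν ≠ 0 :=
  ⟨(1 - c) / ν, by field_simp; simp⟩

lemma exists_add_mul_ne_zero_and {K : Type*} [Field K] (hK : ∃ k : K, k ≠ 0 ∧ k ≠ 1)
    {c₁ c₂ ν : K} (h₁ : ∃ b, c₁ + b * ν ≠ 0) (h₂ : ∃ b, c₂ + b * ν ≠ 0) :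
    ∃ b, c₁ + b * ν ≠ 0 ∧ c₂ + b * ν ≠ 0 := by
  rcases eq_or_ne ν 0 with rfl | hν
  · simp only [mul_zero, add_zero, exists_const] at h₁ h₂ ⊢
    exact ⟨h₁, h₂⟩
  · obtain ⟨b, hb₁, hb₂⟩ := exists_ne_and_ne hK (-c₁ / ν) (-c₂ / ν)
    refine ⟨b, fun h => hb₁ ?_, fun h => hb₂ ?_⟩ <;>
      · rw [eq_div_iff hν]
        linear_combination h

namespace affTransvectionGroup

variable {K X : Type*} [Field K] [AddCommGroup X] [Module K X]
  {ω : X →ₗ[K] X →ₗ[K] K} {S : Set X} {α : X → K}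

local notation:50 z " ∼ " w => MulAction.orbitRel (affTransvectionGroup ω S α) X z w

lemma add_smul_apply_add (z v s : X) (b : K) :
    ω (z + b • v) s + α s = ω z s + α s + b * ω v s := by
  rw [map_add, map_smul, LinearMap.add_apply, LinearMap.smul_apply, smul_eq_mul]
  ring

lemma add_smul_self_apply_add (hω : ω.IsAlt) (z s : X) (b : K) :
    ω (z + b • s) s + α s = ω z s + α s := by
  rw [add_smul_apply_add, hω.self_eq_zero, mul_zero, add_zero]

variable (α) in
/-- `T^{α(t)}_{t,k}`; its inverse is `T^{α(t)}_{t,-k}` since `T_{t,k}` preserves `c_t`. -/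
def affTransvection (hω : ω.IsAlt) (t : X) (k : K) : Equiv.Perm X where
  toFun x := x + (k * (ω x t + α t)) • t
  invFun x := x + (-k * (ω x t + α t)) • t
  left_inv x := by
    dsimp only
    rw [add_smul_self_apply_add hω, neg_mul, neg_smul, add_neg_cancel_right]
  right_inv x := by
    dsimp only
    rw [add_smul_self_apply_add hω, neg_mul, neg_smul, neg_add_cancel_right]

lemma affTransvection_mem (hω : ω.IsAlt) {t : X} (ht : t ∈ S) {k : K} (hk : k ≠ 0) :
    affTransvection α hω t k ∈ affTransvectionGroup ω S α :=
  Subgroup.subset_closure ⟨t, ht, k, hk, fun _ => rfl⟩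

lemma le_stabilizer {z : X} (hz : ∀ t ∈ S, ω z t + α t = 0) :
    affTransvectionGroup ω S α ≤ MulAction.stabilizer (Equiv.Perm X) z := by
  refine Subgroup.closure_le _ |>.2 ?_
  rintro f ⟨t, ht, k, -, hf⟩
  rw [SetLike.mem_coe, MulAction.mem_stabilizer_iff, Equiv.Perm.smul_def, hf, hz t ht,
    mul_zero, zero_smul, add_zero]

lemma exists_apply_add_ne_zero {z : X} (hz : ∃ g ∈ affTransvectionGroup ω S α, g z ≠ z) :
    ∃ t ∈ S, ω z t + α t ≠ 0 := by
  by_contra! h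
  obtain ⟨g, hg, hgz⟩ := hz
  exact hgz (le_stabilizer h hg)

lemma orbitRel_add_smul (hω : ω.IsAlt) {t z : X} (ht : t ∈ S) (hz : ω z t + α t ≠ 0)
    (a : K) : z ∼ z + a • t := by
  rcases eq_or_ne a 0 with rfl | ha
  · simp
  · refine Setoid.symm' _ ⟨⟨_, affTransvection_mem hω ht (div_ne_zero ha hz)⟩, ?_⟩
    change z + (a / (ω z t + α t) * (ω z t + α t)) • t = z + a • t
    rw [div_mul_cancel₀ _ hz]

lemma adj_apply_ne_zero (hω : ω.IsAlt) {u v : S} (h : (transGraph ω S).Adj u v) :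
    ω u v ≠ 0 := by
  rw [transGraph, SimpleGraph.fromRel_adj] at h
  exact h.2.elim id fun h' => mt hω.eq_iff.1 h'

lemma orbitRel_add_smul_of_walk (hω : ω.IsAlt) (hK : ∃ k : K, k ≠ 0 ∧ k ≠ 1) {p q : S}
    (w : (transGraph ω S).Walk p q) (z : X) (a : K) (hz : ω z p + α p ≠ 0)
    (hza : ω (z + a • (q : X)) p + α p ≠ 0) : z ∼ z + a • (q : X) := by
  induction w generalizing z with
  | nil => exact orbitRel_add_smul hω (Subtype.mem _) hz a
  | @cons p u q hpu w ih =>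
    have hν := adj_apply_ne_zero hω hpu
    -- Detour through `z + b p`, with `b` chosen so that `c_u` is nonzero along the way.
    obtain ⟨b, hb, hab⟩ := exists_add_mul_ne_zero_and hK
      (exists_add_mul_ne_zero hν (ω z u + α u))
      (exists_add_mul_ne_zero hν (ω (z + a • (q : X)) u + α u))
    have h₁ : z ∼ z + b • (p : X) := orbitRel_add_smul hω p.2 hz b
    have h₂ : z + b • (p : X) ∼ z + b • (p : X) + a • (q : X) := by
      refine ih _ (by rwa [add_smul_apply_add]) ?_
      rwa [add_right_comm, add_smul_apply_add]
    have h₃ : z + a • (q : X) ∼ z + a • (q : X) + b • (p : X) := orbitRel_add_smul hω p.2 hza b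
    rw [add_right_comm] at h₃
    exact Setoid.trans' _ (Setoid.trans' _ h₁ h₂) (Setoid.symm' _ h₃)

lemma orbitRel_add_smul_of_connected (hω : ω.IsAlt) (hK : ∃ k : K, k ≠ 0 ∧ k ≠ 1)
    (hconn : (transGraph ω S).Connected) {s t : X} (hs : s ∈ S) (ht : t ∈ S) {z : X} (a : K)
    (hz : ω z s + α s ≠ 0) (hza : ω (z + a • t) s + α s ≠ 0) : z ∼ z + a • t :=
  (hconn.preconnected ⟨s, hs⟩ ⟨t, ht⟩).elim fun w =>
    orbitRel_add_smul_of_walk hω hK w z a hz hza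

lemma orbitRel_add_of_mem_span (hω : ω.IsAlt) (hK : ∃ k : K, k ≠ 0 ∧ k ≠ 1)
    (hconn : (transGraph ω S).Connected) {s : X} (hs : s ∈ S) {v : X}
    (hv : v ∈ Submodule.span K S) {z : X} (hz : ω z s + α s ≠ 0)
    (hzv : ω (z + v) s + α s ≠ 0) : z ∼ z + v := by
  rw [← Submodule.mem_toAddSubmonoid, Submodule.span_eq_closure] at hv
  induction hv using AddSubmonoid.closure_induction_left generalizing z with
  | zero => simp
  | add_left _ hat v _ ih =>
    obtain ⟨a, -, t, ht, rfl⟩ := hat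
    dsimp only at hzv ⊢
    -- Move along `t` first, by an amount `b` keeping `c_s` nonzero before and after adding `v`.
    obtain ⟨b, hb, hbv⟩ := exists_add_mul_ne_zero_and hK (c₁ := ω z s + α s)
      (c₂ := ω (z + v) s + α s) (ν := ω t s) ⟨0, by simpa⟩
      ⟨a, by rwa [← add_smul_apply_add, add_assoc, add_comm v]⟩
    have h₁ : z ∼ z + b • t :=
      orbitRel_add_smul_of_connected hω hK hconn hs ht b hz (by rwa [add_smul_apply_add])
    have h₂ : z + b • t ∼ z + b • t + v := by
      refine ih (by rwa [add_smul_apply_add]) ?_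
      rwa [add_right_comm, add_smul_apply_add]
    have hend : z + b • t + v + (a - b) • t = z + (a • t + v) := by module
    have h₃ : z + b • t + v ∼ z + b • t + v + (a - b) • t :=
      orbitRel_add_smul_of_connected hω hK hconn hs ht _
        (by rwa [add_right_comm, add_smul_apply_add]) (by rwa [hend])
    rw [hend] at h₃
    exact Setoid.trans' _ (Setoid.trans' _ h₁ h₂) h₃

lemma exists_orbitRel_apply_add_ne_zero (hω : ω.IsAlt) {p q : S}
    (w : (transGraph ω S).Walk p q) {z : X} (hz : ω z p + α p ≠ 0) :
    ∃ z', (z ∼ z') ∧ ω z' q + α q ≠ 0 := by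
  induction w generalizing z with
  | nil => exact ⟨z, Setoid.refl' _ z, hz⟩
  | @cons p u q hpu w ih =>
    obtain ⟨b, hb⟩ := exists_add_mul_ne_zero (adj_apply_ne_zero hω hpu) (ω z u + α u)
    obtain ⟨z', hz', hz'q⟩ := ih (z := z + b • (p : X)) (by rwa [add_smul_apply_add])
    exact ⟨z', Setoid.trans' _ (orbitRel_add_smul hω p.2 hz b) hz', hz'q⟩

end affTransvectionGroup

open affTransvectionGroup in
theorem stmt9_general {K X : Type*} [Field K] [AddCommGroup X] [Module K X]
    (ω : X →ₗ[K] X →ₗ[K] K) (halt : ∀ x, ω x x = 0)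
    (hK : ∃ k : K, k ≠ 0 ∧ k ≠ 1)
    (S : Set X) (hspan : Submodule.span K S = ⊤)
    (hconn : (transGraph ω S).Connected)
    (α : Module.Dual K X) (x y : X)
    (hx : ∃ g ∈ affTransvectionGroup ω S ⇑α, g x ≠ x)
    (hy : ∃ g ∈ affTransvectionGroup ω S ⇑α, g y ≠ y) :
    ∃ g ∈ affTransvectionGroup ω S ⇑α, g x = y := by
  obtain ⟨s, hs, hxs⟩ := exists_apply_add_ne_zero hx
  obtain ⟨t, ht, hyt⟩ := exists_apply_add_ne_zero hy
  obtain ⟨w⟩ := hconn.preconnected ⟨s, hs⟩ ⟨t, ht⟩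
  obtain ⟨x', hxx', hx't⟩ := exists_orbitRel_apply_add_ne_zero halt w hxs
  have hx'y := orbitRel_add_of_mem_span halt hK hconn ht (v := y - x') (by simp [hspan]) hx't
    (by rwa [add_sub_cancel])
  rw [add_sub_cancel] at hx'y
  obtain ⟨⟨g, hg⟩, hgx⟩ := Setoid.symm' _ (Setoid.trans' _ hxx' hx'y)
  exact ⟨g, hg, hgx⟩

/-- if `K` has more than two elements, `S` spans `X` and `G(S)`
is connected, then for every `α ∈ X*` the affine transvection group `Tr^α(S)`
has at most one non-singleton orbit on `X`: any two points that are not fixed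
by the whole group are in the same orbit. -/
theorem stmt9 {K X : Type*} [Field K] [AddCommGroup X] [Module K X]
    [FiniteDimensional K X]
    (ω : X →ₗ[K] X →ₗ[K] K) (halt : ∀ x, ω x x = 0)
    (hK : ∃ k : K, k ≠ 0 ∧ k ≠ 1)
    (S : Set X) (hspan : Submodule.span K S = ⊤)
    (hconn : (transGraph ω S).Connected)
    (α : Module.Dual K X) (x y : X)
    (hx : ∃ g ∈ affTransvectionGroup ω S ⇑α, g x ≠ x)
    (hy : ∃ g ∈ affTransvectionGroup ω S ⇑α, g y ≠ y) :
    ∃ g ∈ affTransvectionGroup ω S ⇑α, g x = y :=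
  stmt9_general ω halt hK S hspan hconn α x y hx hy
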